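/- arXiv:1807.04643 — 4 statements merged into one kernel-verified Lean document; each statement's English description precedes it below -/
import Mathlib

section
/- Let A ∈ ℝ^{m×n}, let K ≥ 1 be an integer, and suppose δ ∈ [0,1) satisfies the RIP of order K+1 for A. Let x ∈ ℝⁿ be K-sparse with support Ω = supp(x), and let S ⊊ Ω be any subset with |S| < |Ω| (possibly S = ∅). Then ‖A_{Ω∖S}ᵀ P_S^⊥ A_{Ω∖S} x_{Ω∖S}‖_∞ − ‖A_{Ω^c}ᵀ P_S^⊥ A_{Ω∖S} x_{Ω∖S}‖_∞ ≥ (1 − √(|Ω|−|S|+1)·δ) · ‖x_{Ω∖S}‖₂ / √(|Ω|−|S|). -/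
open Matrix Finset

noncomputable def l2norm {ι : Type*} [Fintype ι] (v : ι → ℝ) : ℝ :=
  Real.sqrt (∑ i, v i ^ 2)

noncomputable def sparseSupport {n : ℕ} (x : Fin n → ℝ) : Finset (Fin n) :=
  Finset.univ.filter (fun i => x i ≠ 0)

def RIP {m n : ℕ} (A : Matrix (Fin m) (Fin n) ℝ) (k : ℕ) (δ : ℝ) : Prop :=
  ∀ x : Fin n → ℝ, (sparseSupport x).card ≤ k →
    (1 - δ) * (∑ i, x i ^ 2) ≤ (∑ i, (A.mulVec x) i ^ 2) ∧
    (∑ i, (A.mulVec x) i ^ 2) ≤ (1 + δ) * (∑ i, x i ^ 2)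

def colSub {m n : ℕ} (A : Matrix (Fin m) (Fin n) ℝ) (S : Finset (Fin n)) :
    Matrix (Fin m) {j // j ∈ S} ℝ :=
  fun i j => A i j.1

noncomputable def projPerp {m n : ℕ} (A : Matrix (Fin m) (Fin n) ℝ) (S : Finset (Fin n)) :
    Matrix (Fin m) (Fin m) ℝ :=
  1 - colSub A S * ((colSub A S)ᵀ * colSub A S)⁻¹ * (colSub A S)ᵀ

/-- The subvector `x_T`, extended by zero outside `T` (so that `A_T x_T = A (restrictVec x T)`). -/
def restrictVec {n : ℕ} (x : Fin n → ℝ) (T : Finset (Fin n)) : Fin n → ℝ :=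
  fun i => if i ∈ T then x i else 0

/-- `‖(w i)_{i ∈ T}‖_∞ = max_{i ∈ T} |w i|` (equal to `0` when `T = ∅`). -/
noncomputable def supAbs {n : ℕ} (T : Finset (Fin n)) (w : Fin n → ℝ) : ℝ :=
  sSup ((fun i => |w i|) '' ↑T)

/-!
Write `P = P_S^⊥`, `v = x_{Ω∖S}`, `t = |Ω∖S|` and `g = Aᵀ P A v`. The part of `A w` removed by
`P` is `A c` with `c` supported on `S`, so for `w` supported in `Ω∖S` plus one further index,
`P A` inherits the RIP bounds of `A` of order `K + 1`; and since `P` is an orthogonal projection,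
`⟨P A w, P A v⟩ = ⟨w, g⟩`. For `j ∉ Ω`, comparing the lower bound at `(1 + √(t+1)) v + h` with
the upper bound at `(1 - √(t+1)) v + h`, where `h = ±√t ‖v‖ eⱼ`, yields
`(1 - √(t+1) δ) ‖v‖² + √t ‖v‖ |g j| ≤ ⟨v, g⟩`, while Cauchy–Schwarz on `Ω∖S` gives
`⟨v, g⟩ ≤ √t ‖v‖ max_{Ω∖S} |g|`. Dividing by `√t ‖v‖` bounds every `|g j|` off `Ω`.
-/

section DotProduct

variable {ι κ : Type*} [Fintype ι] [Fintype κ]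

lemma sum_sq_eq_dotProduct_self (v : ι → ℝ) :
    ∑ i, v i ^ 2 = v ⬝ᵥ v := by
  simp only [dotProduct, sq]

lemma l2norm_sq (v : ι → ℝ) : l2norm v ^ 2 = v ⬝ᵥ v := by
  rw [l2norm, Real.sq_sqrt (by positivity), sum_sq_eq_dotProduct_self]

lemma dotProduct_self_nonneg (v : ι → ℝ) : 0 ≤ v ⬝ᵥ v := by
  simpa using dotProduct_self_star_nonneg v

lemma mulVec_dotProduct (M : Matrix κ ι ℝ) (w : ι → ℝ) (q : κ → ℝ) :
    (M *ᵥ w) ⬝ᵥ q = w ⬝ᵥ (Mᵀ *ᵥ q) := by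
  rw [dotProduct_transpose_mulVec, dotProduct_comm]

lemma one_sub_mul_dotProduct_le_mulVec_add_dotProduct_mulVec
    (Φ : Matrix κ ι ℝ) {δ s : ℝ} (hs : 0 < s) {v h : ι → ℝ} (hvh : v ⬝ᵥ h = 0)
    (hh : h ⬝ᵥ h = (s ^ 2 - 1) * (v ⬝ᵥ v))
    (hlow : (1 - δ) * (((1 + s) • v + h) ⬝ᵥ ((1 + s) • v + h)) ≤
      (Φ *ᵥ ((1 + s) • v + h)) ⬝ᵥ (Φ *ᵥ ((1 + s) • v + h)))
    (hup : (Φ *ᵥ ((1 - s) • v + h)) ⬝ᵥ (Φ *ᵥ ((1 - s) • v + h)) ≤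
      (1 + δ) * (((1 - s) • v + h) ⬝ᵥ ((1 - s) • v + h))) :
    (1 - s * δ) * (v ⬝ᵥ v) ≤ (Φ *ᵥ (v + h)) ⬝ᵥ (Φ *ᵥ v) := by
  -- the two test vectors have squared norms `(2s² ± 2s) ‖v‖²`, while the squared norms of their
  -- images differ by exactly `4s ⟨Φ (v + h), Φ v⟩`
  simp only [mulVec_add, mulVec_smul, add_dotProduct, dotProduct_add, smul_dotProduct,
    dotProduct_smul, smul_eq_mul, dotProduct_comm h v, dotProduct_comm (Φ *ᵥ h) (Φ *ᵥ v),
    hvh, hh] at hlow hup ⊢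
  refine le_of_mul_le_mul_left ?_ (by positivity : (0 : ℝ) < 4 * s)
  linear_combination hlow + hup

variable {P : Matrix κ κ ℝ}

lemma mulVec_dotProduct_mulVec_of_symm_idempotent (hsymm : Pᵀ = P) (hidem : P * P = P)
    (a b : κ → ℝ) : (P *ᵥ a) ⬝ᵥ (P *ᵥ b) = a ⬝ᵥ (P *ᵥ b) := by
  rw [mulVec_dotProduct, hsymm, mulVec_mulVec, hidem]

lemma mulVec_dotProduct_self_le_of_symm_idempotent (hsymm : Pᵀ = P) (hidem : P * P = P)
    (u : κ → ℝ) : (P *ᵥ u) ⬝ᵥ (P *ᵥ u) ≤ u ⬝ᵥ u := by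
  have h := dotProduct_self_nonneg (u - P *ᵥ u)
  have hPu := mulVec_dotProduct_mulVec_of_symm_idempotent hsymm hidem u u
  simp only [sub_dotProduct, dotProduct_sub] at h
  rw [dotProduct_comm (P *ᵥ u) u] at h
  linarith

end DotProduct

section ProjPerp

variable {m n : ℕ} (A : Matrix (Fin m) (Fin n) ℝ) (S : Finset (Fin n))

lemma colSub_eq_mul :
    colSub A S = A * (1 : Matrix (Fin n) (Fin n) ℝ).submatrix (Equiv.refl _) Subtype.val := by
  rw [mul_submatrix_one]
  rfl

lemma transpose_projPerp : (projPerp A S)ᵀ = projPerp A S := by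
  simp [projPerp, transpose_nonsing_inv, Matrix.mul_assoc]

lemma projPerp_mul_self : projPerp A S * projPerp A S = projPerp A S := by
  set B := colSub A S
  by_cases hG : IsUnit (Bᵀ * B)
  · have hBP : Bᵀ * projPerp A S = 0 := by
      rw [projPerp, Matrix.mul_sub, Matrix.mul_one, ← Matrix.mul_assoc, ← Matrix.mul_assoc,
        mul_nonsing_inv _ ((isUnit_iff_isUnit_det _).mp hG), Matrix.one_mul, sub_self]
    nth_rewrite 1 [projPerp]
    rw [Matrix.sub_mul, Matrix.one_mul, Matrix.mul_assoc, hBP, Matrix.mul_zero, sub_zero]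
  -- a singular Gram matrix has `⁻¹ = 0`, and then `projPerp A S = 1`
  · simp [projPerp, B, nonsing_inv_apply_not_isUnit _ (mt (isUnit_iff_isUnit_det _).mpr hG)]

lemma exists_projPerp_mulVec_eq_sub (u : Fin m → ℝ) :
    ∃ c : Fin n → ℝ, (∀ i ∉ S, c i = 0) ∧ projPerp A S *ᵥ u = u - A *ᵥ c := by
  set E := (1 : Matrix (Fin n) (Fin n) ℝ).submatrix (Equiv.refl _) (Subtype.val : S → Fin n)
  have hAE : ∀ y, A *ᵥ (E *ᵥ y) = colSub A S *ᵥ y := fun y => by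
    rw [mulVec_mulVec, colSub_eq_mul]
  refine ⟨E *ᵥ (((colSub A S)ᵀ * colSub A S)⁻¹ *ᵥ ((colSub A S)ᵀ *ᵥ u)), fun i hi => ?_, ?_⟩
  · exact Finset.sum_eq_zero fun j _ =>
      mul_eq_zero_of_left (one_apply_ne fun (h : i = j.1) => hi (h ▸ j.2)) _
  · rw [hAE, projPerp, sub_mulVec, one_mulVec, mulVec_mulVec, mulVec_mulVec]

end ProjPerp

lemma card_sparseSupport_le {n : ℕ} {U : Finset (Fin n)} {x : Fin n → ℝ}
    (hx : ∀ i ∉ U, x i = 0) : (sparseSupport x).card ≤ U.card :=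
  card_le_card fun i hi => by
    by_contra hiU
    simp [sparseSupport, hx i hiU] at hi

lemma l2norm_restrictVec_pos {n : ℕ} {x : Fin n → ℝ} {T : Finset (Fin n)} (hT : T.Nonempty)
    (hTx : T ⊆ sparseSupport x) : 0 < l2norm (restrictVec x T) := by
  obtain ⟨i, hi⟩ := hT
  have hxi : x i ≠ 0 := by simpa [sparseSupport] using hTx hi
  refine Real.sqrt_pos.mpr (sum_pos' (fun _ _ => sq_nonneg _) ⟨i, mem_univ _, ?_⟩)
  rw [restrictVec, if_pos hi]
  positivity

namespace RIP

variable {m n k : ℕ} {A : Matrix (Fin m) (Fin n) ℝ} {δ : ℝ} {S U : Finset (Fin n)}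

lemma one_sub_mul_dotProduct_le (hA : RIP A k δ) (hU : U.card ≤ k) {x : Fin n → ℝ}
    (hx : ∀ i ∉ U, x i = 0) : (1 - δ) * (x ⬝ᵥ x) ≤ (A *ᵥ x) ⬝ᵥ (A *ᵥ x) := by
  simpa only [sum_sq_eq_dotProduct_self] using (hA x ((card_sparseSupport_le hx).trans hU)).1

lemma dotProduct_le_one_add_mul (hA : RIP A k δ) (hU : U.card ≤ k) {x : Fin n → ℝ}
    (hx : ∀ i ∉ U, x i = 0) : (A *ᵥ x) ⬝ᵥ (A *ᵥ x) ≤ (1 + δ) * (x ⬝ᵥ x) := by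
  simpa only [sum_sq_eq_dotProduct_self] using (hA x ((card_sparseSupport_le hx).trans hU)).2

lemma projPerp_dotProduct_le_one_add_mul (hA : RIP A k δ) (hU : U.card ≤ k) {x : Fin n → ℝ}
    (hx : ∀ i ∉ U, x i = 0) :
    (projPerp A S *ᵥ (A *ᵥ x)) ⬝ᵥ (projPerp A S *ᵥ (A *ᵥ x)) ≤ (1 + δ) * (x ⬝ᵥ x) :=
  (mulVec_dotProduct_self_le_of_symm_idempotent (transpose_projPerp A S) (projPerp_mul_self A S)
    _).trans (hA.dotProduct_le_one_add_mul hU hx)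

lemma one_sub_mul_dotProduct_le_projPerp (hA : RIP A k δ) (hδ : δ ≤ 1) (hSU : S ⊆ U)
    (hU : U.card ≤ k) {x : Fin n → ℝ} (hx : ∀ i ∉ U \ S, x i = 0) :
    (1 - δ) * (x ⬝ᵥ x) ≤ (projPerp A S *ᵥ (A *ᵥ x)) ⬝ᵥ (projPerp A S *ᵥ (A *ᵥ x)) := by
  obtain ⟨c, hc, hPx⟩ := exists_projPerp_mulVec_eq_sub A S (A *ᵥ x)
  have hxS : ∀ i ∈ S, x i = 0 := fun i hi => hx i fun h => (mem_sdiff.mp h).2 hi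
  have hxc : x ⬝ᵥ c = 0 := Finset.sum_eq_zero fun i _ => by
    by_cases hi : i ∈ S
    · rw [hxS i hi, zero_mul]
    · rw [hc i hi, mul_zero]
  have hle : x ⬝ᵥ x ≤ (x - c) ⬝ᵥ (x - c) := by
    simp only [sub_dotProduct, dotProduct_sub, dotProduct_comm c x, hxc]
    linarith [dotProduct_self_nonneg c]
  rw [hPx, ← mulVec_sub]
  refine (mul_le_mul_of_nonneg_left hle (by linarith)).trans
    (hA.one_sub_mul_dotProduct_le hU fun i hi => ?_)
  rw [Pi.sub_apply, hx i fun h => hi (mem_sdiff.mp h).1, hc i fun h => hi (hSU h), sub_zero]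

lemma one_sub_sqrt_mul_dotProduct_le (hA : RIP A k δ) (hδ : δ ≤ 1) (hSU : S ⊆ U)
    (hU : U.card ≤ k) {v h : Fin n → ℝ} (hv : ∀ i ∉ U \ S, v i = 0)
    (hh : ∀ i ∉ U \ S, h i = 0) (hvh : v ⬝ᵥ h = 0) {t : ℝ} (ht : 0 ≤ t)
    (hhv : h ⬝ᵥ h = t * (v ⬝ᵥ v)) :
    (1 - √(t + 1) * δ) * (v ⬝ᵥ v) ≤ (v + h) ⬝ᵥ (Aᵀ *ᵥ (projPerp A S *ᵥ (A *ᵥ v))) := by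
  have hs2 : √(t + 1) ^ 2 = t + 1 := Real.sq_sqrt (by linarith)
  have hvanish : ∀ a : ℝ, ∀ i ∉ U \ S, (a • v + h) i = 0 := fun a i hi => by
    simp [hv i hi, hh i hi]
  have hlow := hA.one_sub_mul_dotProduct_le_projPerp hδ hSU hU (hvanish (1 + √(t + 1)))
  have hup := hA.projPerp_dotProduct_le_one_add_mul (S := S) hU
    fun i hi => hvanish (1 - √(t + 1)) i fun hi' => hi (mem_sdiff.mp hi').1
  rw [mulVec_mulVec] at hlow hup
  have key := one_sub_mul_dotProduct_le_mulVec_add_dotProduct_mulVec (projPerp A S * A)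
    (Real.sqrt_pos.mpr (by linarith : (0 : ℝ) < t + 1)) hvh (by rw [hhv, hs2]; ring) hlow hup
  rwa [← mulVec_mulVec, ← mulVec_mulVec, mulVec_dotProduct_mulVec_of_symm_idempotent
    (transpose_projPerp A S) (projPerp_mul_self A S), mulVec_dotProduct] at key

lemma one_sub_sqrt_mul_add_sqrt_mul_abs_le (hA : RIP A k δ) (hδ : δ ≤ 1) (hSU : S ⊆ U)
    (hU : U.card ≤ k) {v : Fin n → ℝ} (hv : ∀ i ∉ U \ S, v i = 0) {j : Fin n}
    (hj : j ∈ U \ S) (hvj : v j = 0) {t : ℝ} (ht : 0 ≤ t) :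
    (1 - √(t + 1) * δ) * l2norm v ^ 2 +
        √t * l2norm v * |(Aᵀ *ᵥ (projPerp A S *ᵥ (A *ᵥ v))) j| ≤
      v ⬝ᵥ (Aᵀ *ᵥ (projPerp A S *ᵥ (A *ᵥ v))) := by
  set g := Aᵀ *ᵥ (projPerp A S *ᵥ (A *ᵥ v))
  have key : ∀ ε : ℝ, ε ^ 2 = 1 →
      (1 - √(t + 1) * δ) * l2norm v ^ 2 ≤ v ⬝ᵥ g + ε * (√t * l2norm v) * g j := by
    intro ε hε
    have hsingle : ∀ i ∉ U \ S, (Pi.single j (ε * (√t * l2norm v)) : Fin n → ℝ) i = 0 := fun i hi =>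
      Pi.single_eq_of_ne (fun (h : i = j) => hi (h ▸ hj)) _
    have := hA.one_sub_sqrt_mul_dotProduct_le hδ hSU hU hv hsingle
      (by rw [dotProduct_single, hvj, zero_mul]) ht
      (by rw [dotProduct_single, Pi.single_eq_same, ← l2norm_sq]
          linear_combination (√t * l2norm v) ^ 2 * hε + l2norm v ^ 2 * Real.sq_sqrt ht)
    rwa [add_dotProduct, single_dotProduct, ← l2norm_sq] at this
  have hplus := key 1 (by norm_num)
  have hminus := key (-1) (by norm_num)
  have hc : 0 ≤ √t * l2norm v := mul_nonneg (Real.sqrt_nonneg _) (Real.sqrt_nonneg _)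
  rcases abs_cases (g j) with ⟨habs, _⟩ | ⟨habs, _⟩ <;> rw [habs] <;> linarith

end RIP

section SupAbs

variable {n : ℕ} {T : Finset (Fin n)} {w : Fin n → ℝ}

lemma supAbs_nonneg : 0 ≤ supAbs T w :=
  Real.sSup_nonneg (by rintro _ ⟨i, -, rfl⟩; exact abs_nonneg _)

lemma abs_le_supAbs {i : Fin n} (hi : i ∈ T) : |w i| ≤ supAbs T w :=
  le_csSup ((T.finite_toSet.image _).bddAbove) ⟨i, hi, rfl⟩

lemma supAbs_le {b : ℝ} (hb : 0 ≤ b) (h : ∀ i ∈ T, |w i| ≤ b) : supAbs T w ≤ b :=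
  Real.sSup_le (by rintro _ ⟨i, hi, rfl⟩; exact h i hi) hb

lemma dotProduct_le_sqrt_card_mul_l2norm_mul_supAbs {v : Fin n → ℝ} (hv : ∀ i ∉ T, v i = 0)
    (g : Fin n → ℝ) : v ⬝ᵥ g ≤ √T.card * l2norm v * supAbs T g := by
  have hsum : ∀ f : Fin n → ℝ, ∑ i ∈ T, v i * f i = ∑ i, v i * f i := fun f =>
    Finset.sum_subset (subset_univ T) fun i _ hi => by rw [hv i hi, zero_mul]
  have hg : ∑ i ∈ T, g i ^ 2 ≤ T.card * supAbs T g ^ 2 := by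
    rw [← nsmul_eq_mul, ← sum_const]
    exact sum_le_sum fun i hi => by
      rw [← sq_abs]
      exact pow_le_pow_left₀ (abs_nonneg _) (abs_le_supAbs hi) 2
  calc v ⬝ᵥ g = ∑ i ∈ T, v i * g i := (hsum g).symm
    _ ≤ √(∑ i ∈ T, v i ^ 2) * √(∑ i ∈ T, g i ^ 2) := Real.sum_mul_le_sqrt_mul_sqrt _ _ _
    _ ≤ l2norm v * √(T.card * supAbs T g ^ 2) := by
      rw [l2norm, ← show ∑ i ∈ T, v i ^ 2 = ∑ i, v i ^ 2 by simpa only [sq] using hsum v]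
      gcongr
    _ = √T.card * l2norm v * supAbs T g := by
      rw [Real.sqrt_mul (Nat.cast_nonneg _), Real.sqrt_sq supAbs_nonneg]
      ring

lemma div_le_supAbs_sub_supAbs {V : Finset (Fin n)} {a c : ℝ} (hc : 0 < c)
    (h0 : a ≤ c * supAbs T w) (h : ∀ j ∈ V, a + c * |w j| ≤ c * supAbs T w) :
    a / c ≤ supAbs T w - supAbs V w := by
  have hle : ∀ y, a + c * y ≤ c * supAbs T w → y ≤ supAbs T w - a / c := fun y hy => by
    rw [le_sub_iff_add_le', ← le_sub_iff_add_le, div_le_iff₀ hc]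
    linarith
  rw [le_sub_comm]
  exact supAbs_le (hle 0 (by linarith)) fun j hj => hle _ (h j hj)

end SupAbs

theorem omp_lemma_main_general {m n : ℕ} (A : Matrix (Fin m) (Fin n) ℝ) (K : ℕ)
    (δ : ℝ) (hδ0 : 0 ≤ δ) (hδ1 : δ < 1) (hRIP : RIP A (K + 1) δ)
    (x : Fin n → ℝ) (hx : (sparseSupport x).card ≤ K)
    (S : Finset (Fin n)) (hS : S ⊆ sparseSupport x)
    (hcard : S.card < (sparseSupport x).card) :
    supAbs (sparseSupport x \ S)
        (Aᵀ.mulVec ((projPerp A S).mulVec (A.mulVec (restrictVec x (sparseSupport x \ S)))))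
      - supAbs ((sparseSupport x)ᶜ)
        (Aᵀ.mulVec ((projPerp A S).mulVec (A.mulVec (restrictVec x (sparseSupport x \ S)))))
      ≥ (1 - Real.sqrt (((sparseSupport x).card : ℝ) - (S.card : ℝ) + 1) * δ)
          * l2norm (restrictVec x (sparseSupport x \ S))
          / Real.sqrt (((sparseSupport x).card : ℝ) - (S.card : ℝ)) := by
  set Ω := sparseSupport x
  set v := restrictVec x (Ω \ S)
  set g := Aᵀ *ᵥ (projPerp A S *ᵥ (A *ᵥ v))
  set t : ℝ := Ω.card - S.card
  set L := l2norm v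
  have hv : ∀ i ∉ Ω \ S, v i = 0 := fun i hi => if_neg hi
  have hTcard : (Ω \ S).card = Ω.card - S.card := card_sdiff_of_subset hS
  have ht : 0 < t := sub_pos.mpr (by exact_mod_cast hcard)
  have hL : 0 < L := l2norm_restrictVec_pos (card_pos.mp (by omega)) sdiff_subset
  have hE0 : (1 - δ) * L ^ 2 ≤ v ⬝ᵥ g := by
    rw [l2norm_sq, ← mulVec_dotProduct, ← mulVec_dotProduct_mulVec_of_symm_idempotent
      (transpose_projPerp A S) (projPerp_mul_self A S)]
    exact hRIP.one_sub_mul_dotProduct_le_projPerp hδ1.le hS (by omega) hv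
  have hE1 : v ⬝ᵥ g ≤ √t * L * supAbs (Ω \ S) g := by
    have hT : ((Ω \ S).card : ℝ) = t := by rw [hTcard, Nat.cast_sub hcard.le]
    simpa only [hT] using dotProduct_le_sqrt_card_mul_l2norm_mul_supAbs hv g
  have hE2 : ∀ j ∉ Ω, (1 - √(t + 1) * δ) * L ^ 2 + √t * L * |g j| ≤ v ⬝ᵥ g := fun j hj =>
    hRIP.one_sub_sqrt_mul_add_sqrt_mul_abs_le hδ1.le (hS.trans (subset_insert j Ω))
      ((card_insert_le j Ω).trans (by omega))
      (fun i hi => hv i fun h => hi (sdiff_subset_sdiff (subset_insert j Ω) le_rfl h))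
      (mem_sdiff.mpr ⟨mem_insert_self j Ω, fun h => hj (hS h)⟩)
      (hv j fun h => hj (mem_sdiff.mp h).1) ht.le
  have hδs : δ * L ^ 2 ≤ √(t + 1) * δ * L ^ 2 := by
    gcongr
    exact le_mul_of_one_le_left hδ0 (Real.one_le_sqrt.mpr (by linarith))
  have key := div_le_supAbs_sub_supAbs (T := Ω \ S) (V := Ωᶜ) (w := g)
    (a := (1 - √(t + 1) * δ) * L ^ 2) (mul_pos (Real.sqrt_pos.mpr ht) hL)
    (by linarith) fun j hj => by linarith [hE2 j (mem_compl.mp hj)]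
  rwa [sq, ← mul_assoc, mul_div_mul_right _ _ hL.ne'] at key

/-- Lemma 1: for `S ⊊ Ω = supp(x)`,
`‖A_{Ω∖S}ᵀ P_S^⊥ A_{Ω∖S} x_{Ω∖S}‖_∞ − ‖A_{Ω^c}ᵀ P_S^⊥ A_{Ω∖S} x_{Ω∖S}‖_∞
  ≥ (1 − √(|Ω|−|S|+1)·δ) ‖x_{Ω∖S}‖₂ / √(|Ω|−|S|)`. -/
theorem omp_lemma_main {m n : ℕ} (A : Matrix (Fin m) (Fin n) ℝ) (K : ℕ) (hK : 1 ≤ K)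
    (δ : ℝ) (hδ0 : 0 ≤ δ) (hδ1 : δ < 1) (hRIP : RIP A (K + 1) δ)
    (x : Fin n → ℝ) (hx : (sparseSupport x).card ≤ K)
    (S : Finset (Fin n)) (hS : S ⊆ sparseSupport x)
    (hcard : S.card < (sparseSupport x).card) :
    supAbs (sparseSupport x \ S)
        (Aᵀ.mulVec ((projPerp A S).mulVec (A.mulVec (restrictVec x (sparseSupport x \ S)))))
      - supAbs ((sparseSupport x)ᶜ)
        (Aᵀ.mulVec ((projPerp A S).mulVec (A.mulVec (restrictVec x (sparseSupport x \ S)))))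
      ≥ (1 - Real.sqrt (((sparseSupport x).card : ℝ) - (S.card : ℝ) + 1) * δ)
          * l2norm (restrictVec x (sparseSupport x \ S))
          / Real.sqrt (((sparseSupport x).card : ℝ) - (S.card : ℝ)) :=
  omp_lemma_main_general A K δ hδ0 hδ1 hRIP x hx S hS hcard
end

section
/- Let y = Ax, where A ∈ ℝ^{m×n} and x ∈ ℝⁿ is K-sparse with nonempty support Ω = supp(x). Suppose δ ∈ [0,1) satisfies the RIP of order K+1 for A with δ < 1/√(K+1). Consider any sequence produced by the OMP algorithm: S₀ = ∅, r⁰ = y, and for k ≥ 1, s^k is any index maximizing |⟨r^{k−1}, A_i⟩| over 1 ≤ i ≤ n, S_k = S_{k−1} ∪ {s^k}, and r^k = P_{S_k}^⊥ y. Then S_{|Ω|} = Ω, r^{|Ω|} = 0, and the least-squares estimate x̂ supported on S_{|Ω|} defined by x̂_{S_{|Ω|}} = argmin_z ‖y − A_{S_{|Ω|}} z‖₂ (zero outside S_{|Ω|}) equals x; i.e., OMP exactly recovers the K-sparse signal x in at most K iterations. -/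
/-!
For `u` supported on `T`, write `c = Aᵀ A u` for the correlations of the columns of `A` with the
residual `A u`. The RIP makes `A` nearly orthogonal on `T ∪ {i}`, so `‖(c - u)_{T ∪ {i}}‖ ≤ δ ‖u‖`;
together with Cauchy–Schwarz this gives `c_i² ≤ δ² ‖c_{T ∪ {i}}‖²` for every `i ∉ T`. If such an `i`
were at least as correlated as every index of `T`, this would read `c_i² ≤ δ² (|T| + 1) c_i²`,
impossible for `δ < 1 / √(K + 1)` unless `c` vanishes on `T`, which the RIP lower bound excludes.
Since the OMP residual is orthogonal to the columns already chosen, each step therefore adds a new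
index of the support; after `|Ω|` steps `S = Ω`, the residual vanishes, and the least-squares
solution is unique by the RIP.
-/

open Matrix Finset

section Vectors

variable {n : ℕ}

lemma mem_sparseSupport {x : Fin n → ℝ} {i : Fin n} : i ∈ sparseSupport x ↔ x i ≠ 0 := by
  simp [sparseSupport]

lemma sparseSupport_subset_iff {x : Fin n → ℝ} {T : Finset (Fin n)} :
    sparseSupport x ⊆ T ↔ ∀ i ∉ T, x i = 0 := by
  simp only [Finset.subset_iff, mem_sparseSupport]
  exact forall_congr' fun _ => not_imp_comm

lemma sparseSupport_sub_subset {x w : Fin n → ℝ} {T : Finset (Fin n)}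
    (hx : sparseSupport x ⊆ T) (hw : sparseSupport w ⊆ T) : sparseSupport (x - w) ⊆ T := by
  rw [sparseSupport_subset_iff] at *
  intro i hi
  simp [hx i hi, hw i hi]

lemma restrictVec_eq_self {v : Fin n → ℝ} {T : Finset (Fin n)} (hv : sparseSupport v ⊆ T) :
    restrictVec v T = v := by
  funext i
  by_cases hi : i ∈ T
  · simp [restrictVec, hi]
  · simp [restrictVec, hi, sparseSupport_subset_iff.mp hv i hi]

lemma restrictVec_dotProduct (v w : Fin n → ℝ) (T : Finset (Fin n)) :
    restrictVec v T ⬝ᵥ w = ∑ j ∈ T, v j * w j := by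
  simp [restrictVec, dotProduct, ite_mul, Finset.sum_ite_mem]

lemma dotProduct_eq_sum_of_sparseSupport_subset {v : Fin n → ℝ} {T : Finset (Fin n)}
    (hv : sparseSupport v ⊆ T) (w : Fin n → ℝ) : v ⬝ᵥ w = ∑ j ∈ T, v j * w j := by
  rw [← restrictVec_dotProduct, restrictVec_eq_self hv]

lemma l2norm_eq_zero_iff {ι : Type*} [Fintype ι] {v : ι → ℝ} : l2norm v = 0 ↔ v = 0 := by
  rw [l2norm, Real.sqrt_eq_zero (Finset.sum_nonneg fun i _ => sq_nonneg (v i)),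
    ← dotProduct_self_eq_zero]
  simp [dotProduct, sq]

end Vectors

lemma mulVec_dotProduct_s2 {ι κ : Type*} [Fintype ι] [Fintype κ] (A : Matrix κ ι ℝ) (u : ι → ℝ)
    (r : κ → ℝ) : A *ᵥ u ⬝ᵥ r = u ⬝ᵥ Aᵀ *ᵥ r := by
  rw [dotProduct_comm, dotProduct_transpose_mulVec]

lemma sq_mul_lt_one_of_lt_one_div_sqrt {δ t : ℝ} (hδ : 0 ≤ δ) (ht : 0 ≤ t) (h : δ < 1 / √t) :
    δ ^ 2 * t < 1 := by
  rcases ht.eq_or_lt with rfl | ht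
  · simp
  have hδt : δ * √t < 1 := (lt_div_iff₀ (Real.sqrt_pos.mpr ht)).mp h
  calc δ ^ 2 * t = (δ * √t) ^ 2 := by rw [mul_pow, Real.sq_sqrt ht.le]
    _ < 1 := pow_lt_one₀ (by positivity) hδt two_ne_zero

lemma lt_one_of_sq_mul_lt_one {δ : ℝ} {k : ℕ} (hk : 0 < k) (h : δ ^ 2 * k < 1) : δ < 1 := by
  have hk' : (1 : ℝ) ≤ k := by exact_mod_cast hk
  have : δ ^ 2 < 1 := by nlinarith [sq_nonneg δ]
  exact lt_of_abs_lt ((sq_lt_one_iff_abs_lt_one δ).mp this)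

/-- With `e = 1 - δ²`, Cauchy–Schwarz `ρ² ≤ W ν` gives `W ≥ 2eρ - e²ν` since `(ρ - eν)² ≥ 0`. -/
lemma sq_le_sq_mul_add_of_sq_le_mul {γ W ρ ν δ : ℝ} (hW : 0 ≤ W) (hν : 0 ≤ ν) (hδ : δ ^ 2 ≤ 1)
    (hCS : ρ ^ 2 ≤ W * ν) (h : γ ^ 2 + (W - 2 * ρ + ν) ≤ δ ^ 2 * ν) :
    γ ^ 2 ≤ δ ^ 2 * (γ ^ 2 + W) := by
  set e := 1 - δ ^ 2
  have hW' : 2 * e * ρ - e ^ 2 * ν ≤ W := by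
    rcases hν.eq_or_lt with rfl | hν
    · have hρ : ρ ^ 2 ≤ 0 := by simpa using hCS
      simp [pow_eq_zero_iff two_ne_zero |>.mp (le_antisymm hρ (sq_nonneg ρ)), hW]
    · refine le_of_mul_le_mul_right ?_ hν
      nlinarith [sq_nonneg (ρ - e * ν)]
  nlinarith [mul_le_mul_of_nonneg_left h (sub_nonneg.mpr hδ)]

namespace RIP

variable {m n k : ℕ} {A : Matrix (Fin m) (Fin n) ℝ} {δ : ℝ}

lemma dotProduct_bounds (h : RIP A k δ) {v : Fin n → ℝ} (hv : (sparseSupport v).card ≤ k) :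
    (1 - δ) * (v ⬝ᵥ v) ≤ A *ᵥ v ⬝ᵥ A *ᵥ v ∧ A *ᵥ v ⬝ᵥ A *ᵥ v ≤ (1 + δ) * (v ⬝ᵥ v) := by
  simpa only [dotProduct, sq] using h v hv

lemma eq_zero_of_mulVec_eq_zero (h : RIP A k δ) (hδ : δ < 1) {v : Fin n → ℝ}
    (hv : (sparseSupport v).card ≤ k) (hAv : A *ᵥ v = 0) : v = 0 := by
  have hlow := (h.dotProduct_bounds hv).1
  rw [hAv, dotProduct_zero] at hlow
  have hvv : v ⬝ᵥ v ≤ 0 := nonpos_of_mul_nonpos_right hlow (by linarith)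
  exact dotProduct_self_eq_zero.mp
    (le_antisymm hvv (Finset.sum_nonneg fun i _ => mul_self_nonneg (v i)))

lemma eq_of_mulVec_eq (h : RIP A k δ) (hδ : δ < 1) {T : Finset (Fin n)} (hT : T.card ≤ k)
    {v w : Fin n → ℝ} (hv : sparseSupport v ⊆ T) (hw : sparseSupport w ⊆ T)
    (hAvw : A *ᵥ v = A *ᵥ w) : v = w :=
  sub_eq_zero.mp <| h.eq_zero_of_mulVec_eq_zero hδ
    ((Finset.card_le_card (sparseSupport_sub_subset hv hw)).trans hT)
    (by rw [mulVec_sub, hAvw, sub_self])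

/-- The RIP bounds on `v ± β w` make a quadratic in `β` nonnegative; its discriminant gives
the claim. -/
lemma sq_mulVec_dotProduct_sub_le (h : RIP A k δ) {U : Finset (Fin n)} (hU : U.card ≤ k)
    {v w : Fin n → ℝ} (hv : sparseSupport v ⊆ U) (hw : sparseSupport w ⊆ U) :
    (A *ᵥ v ⬝ᵥ A *ᵥ w - v ⬝ᵥ w) ^ 2 ≤ δ ^ 2 * (v ⬝ᵥ v) * (w ⬝ᵥ w) := by
  have hsparse : ∀ β : ℝ, (sparseSupport (v + β • w)).card ≤ k := fun β => by
    refine (Finset.card_le_card ?_).trans hU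
    rw [sparseSupport_subset_iff] at *
    intro i hi
    simp [hv i hi, hw i hi]
  have hquad : ∀ β : ℝ, 0 ≤ (δ * (w ⬝ᵥ w)) * (β * β)
      + (-2 * (A *ᵥ v ⬝ᵥ A *ᵥ w - v ⬝ᵥ w)) * β + δ * (v ⬝ᵥ v) := fun β => by
    have hplus := (h.dotProduct_bounds (hsparse β)).2
    have hminus := (h.dotProduct_bounds (hsparse (-β))).1
    simp only [mulVec_add, mulVec_smul, dotProduct_add, add_dotProduct, dotProduct_smul,
      smul_dotProduct, smul_eq_mul, dotProduct_comm w v, dotProduct_comm (A *ᵥ w) (A *ᵥ v)]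
      at hplus hminus
    nlinarith
  have := discrim_le_zero hquad
  rw [discrim] at this
  nlinarith

lemma sum_sq_correlation_sub_le (h : RIP A k δ) {U : Finset (Fin n)} (hU : U.card ≤ k)
    {u : Fin n → ℝ} (hu : sparseSupport u ⊆ U) :
    ∑ j ∈ U, ((Aᵀ *ᵥ (A *ᵥ u)) j - u j) ^ 2 ≤ δ ^ 2 * (u ⬝ᵥ u) := by
  set c := Aᵀ *ᵥ (A *ᵥ u)
  set g := restrictVec (c - u) U
  set R := ∑ j ∈ U, (c j - u j) ^ 2
  have hg : sparseSupport g ⊆ U := sparseSupport_subset_iff.mpr fun i hi => by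
    simp [g, restrictVec, hi]
  have hgg : g ⬝ᵥ g = R := by
    rw [restrictVec_dotProduct]
    refine Finset.sum_congr rfl fun j hj => ?_
    simp [g, restrictVec, hj, sq]
  have hcross : A *ᵥ g ⬝ᵥ A *ᵥ u - g ⬝ᵥ u = R := by
    rw [mulVec_dotProduct_s2, ← dotProduct_sub, restrictVec_dotProduct]
    simp only [Pi.sub_apply, sq, R, c]
  have hdisc := h.sq_mulVec_dotProduct_sub_le hU hg hu
  rw [hcross, hgg] at hdisc
  have hR : 0 ≤ R := Finset.sum_nonneg fun j _ => sq_nonneg _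
  have huu : 0 ≤ u ⬝ᵥ u := Finset.sum_nonneg fun i _ => mul_self_nonneg (u i)
  rcases hR.eq_or_lt with hR0 | hRpos
  · rw [← hR0]; positivity
  · exact le_of_mul_le_mul_left (by nlinarith) hRpos

lemma sq_correlation_le (h : RIP A k δ) (hδ : δ ^ 2 ≤ 1) {T : Finset (Fin n)} (hT : T.card < k)
    {u : Fin n → ℝ} (hu : sparseSupport u ⊆ T) {i : Fin n} (hi : i ∉ T) :
    (Aᵀ *ᵥ (A *ᵥ u)) i ^ 2 ≤ δ ^ 2 * ∑ j ∈ insert i T, (Aᵀ *ᵥ (A *ᵥ u)) j ^ 2 := by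
  set c := Aᵀ *ᵥ (A *ᵥ u)
  have hUk : (insert i T).card ≤ k := (Finset.card_insert_le i T).trans hT
  have key := h.sum_sq_correlation_sub_le hUk (hu.trans (Finset.subset_insert i T))
  have hui : u i = 0 := sparseSupport_subset_iff.mp hu i hi
  have hexpand : ∑ j ∈ T, (c j - u j) ^ 2
      = ∑ j ∈ T, c j ^ 2 - 2 * ∑ j ∈ T, c j * u j + ∑ j ∈ T, u j ^ 2 := by
    simp only [sub_sq, Finset.sum_add_distrib, Finset.sum_sub_distrib, Finset.mul_sum, mul_assoc]
  have huu : u ⬝ᵥ u = ∑ j ∈ T, u j ^ 2 := by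
    simp only [dotProduct_eq_sum_of_sparseSupport_subset hu, sq]
  rw [Finset.sum_insert hi, hui, sub_zero, hexpand, huu] at key
  rw [Finset.sum_insert hi]
  exact sq_le_sq_mul_add_of_sq_le_mul (Finset.sum_nonneg fun j _ => sq_nonneg _)
    (Finset.sum_nonneg fun j _ => sq_nonneg _) hδ (Finset.sum_mul_sq_le_sq_mul_sq T c u) key

lemma exists_correlation_ne_zero (h : RIP A k δ) (hδ : δ < 1) {T : Finset (Fin n)}
    (hT : T.card ≤ k) {u : Fin n → ℝ} (hu : sparseSupport u ⊆ T) (hu0 : u ≠ 0) :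
    ∃ j ∈ T, (Aᵀ *ᵥ (A *ᵥ u)) j ≠ 0 := by
  by_contra! hc
  refine hu0 (h.eq_zero_of_mulVec_eq_zero hδ ((Finset.card_le_card hu).trans hT) ?_)
  rw [← dotProduct_self_eq_zero, mulVec_dotProduct_s2, dotProduct_eq_sum_of_sparseSupport_subset hu]
  exact Finset.sum_eq_zero fun j hj => by rw [hc j hj, mul_zero]

lemma exists_mem_abs_correlation_gt (h : RIP A k δ) (hδ : δ ^ 2 * k < 1) {T : Finset (Fin n)}
    (hT : T.card < k) {u : Fin n → ℝ} (hu : sparseSupport u ⊆ T) (hu0 : u ≠ 0)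
    {i : Fin n} (hi : i ∉ T) :
    ∃ j ∈ T, |(Aᵀ *ᵥ (A *ᵥ u)) i| < |(Aᵀ *ᵥ (A *ᵥ u)) j| := by
  set c := Aᵀ *ᵥ (A *ᵥ u)
  by_contra! hle
  have hk : (T.card + 1 : ℝ) ≤ k := by exact_mod_cast hT
  have hδ1 : δ ^ 2 ≤ 1 := by nlinarith [sq_nonneg δ]
  have hsum : ∑ j ∈ insert i T, c j ^ 2 ≤ (T.card + 1) * c i ^ 2 := by
    rw [Finset.sum_insert hi, add_comm, add_one_mul]
    gcongr
    simpa using Finset.sum_le_card_nsmul T (fun j => c j ^ 2) (c i ^ 2)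
      fun j hj => sq_le_sq.mpr (hle j hj)
  have hci : c i = 0 := by
    have hbound : c i ^ 2 ≤ δ ^ 2 * ((T.card + 1) * c i ^ 2) :=
      (h.sq_correlation_le hδ1 hT hu hi).trans (by gcongr)
    have hδT : δ ^ 2 * (T.card + 1) < 1 := by nlinarith [sq_nonneg δ]
    have : c i ^ 2 ≤ 0 := by nlinarith [sq_nonneg (c i)]
    exact pow_eq_zero_iff two_ne_zero |>.mp (le_antisymm this (sq_nonneg _))
  obtain ⟨j, hj, hcj⟩ := h.exists_correlation_ne_zero (lt_one_of_sq_mul_lt_one (by omega) hδ)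
    hT.le hu hu0
  exact hcj (abs_nonpos_iff.mp (hci ▸ hle j hj |>.trans_eq abs_zero))

end RIP

section Projection

variable {m n k : ℕ} (A : Matrix (Fin m) (Fin n) ℝ) (S : Finset (Fin n))

def extendByZero (z : S → ℝ) : Fin n → ℝ := fun i => if h : i ∈ S then z ⟨i, h⟩ else 0

lemma sparseSupport_extendByZero_subset (z : S → ℝ) : sparseSupport (extendByZero S z) ⊆ S :=
  sparseSupport_subset_iff.mpr fun _ hi => dif_neg hi

lemma colSub_mulVec (z : S → ℝ) : colSub A S *ᵥ z = A *ᵥ extendByZero S z := by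
  funext i
  simp only [mulVec, dotProduct, colSub, extendByZero]
  rw [← Finset.sum_subset (subset_univ S) fun j _ hj => by simp [hj], ← Finset.sum_coe_sort S]
  simp

variable {A S}

lemma isUnit_det_gram {δ : ℝ} (h : RIP A k δ) (hδ : δ < 1) (hS : S.card ≤ k) :
    IsUnit ((colSub A S)ᵀ * colSub A S).det := by
  rw [isUnit_iff_ne_zero, Ne, ← exists_mulVec_eq_zero_iff]
  rintro ⟨z, hz0, hz⟩
  have hBz : colSub A S *ᵥ z = 0 := by
    rw [← dotProduct_self_eq_zero, mulVec_dotProduct_s2, mulVec_mulVec, hz, dotProduct_zero]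
  rw [colSub_mulVec] at hBz
  have hext := h.eq_zero_of_mulVec_eq_zero hδ
    ((Finset.card_le_card (sparseSupport_extendByZero_subset S z)).trans hS) hBz
  exact hz0 (funext fun j => by simpa [extendByZero] using congrFun hext j)

lemma projPerp_mulVec_eq_sub (y : Fin m → ℝ) :
    ∃ w, sparseSupport w ⊆ S ∧ projPerp A S *ᵥ y = y - A *ᵥ w :=
  ⟨_, sparseSupport_extendByZero_subset S _, by
    rw [projPerp, sub_mulVec, one_mulVec, ← colSub_mulVec, ← mulVec_mulVec, ← mulVec_mulVec]⟩

lemma transpose_mulVec_projPerp_mulVec_apply (hG : IsUnit ((colSub A S)ᵀ * colSub A S).det)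
    (y : Fin m → ℝ) {j : Fin n} (hj : j ∈ S) : (Aᵀ *ᵥ (projPerp A S *ᵥ y)) j = 0 := by
  have horth : (colSub A S)ᵀ * projPerp A S = 0 := by
    rw [projPerp, Matrix.mul_sub, Matrix.mul_one, ← Matrix.mul_assoc, ← Matrix.mul_assoc,
      mul_nonsing_inv _ hG, Matrix.one_mul, sub_self]
  have := congrFun (congrArg (· *ᵥ y) horth) ⟨j, hj⟩
  simp only [← mulVec_mulVec, zero_mulVec] at this
  exact this

lemma projPerp_mulVec_mulVec_eq_zero (hG : IsUnit ((colSub A S)ᵀ * colSub A S).det)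
    {v : Fin n → ℝ} (hv : sparseSupport v ⊆ S) : projPerp A S *ᵥ (A *ᵥ v) = 0 := by
  obtain ⟨w, hw, hr⟩ := projPerp_mulVec_eq_sub (A *ᵥ v)
  rw [← dotProduct_self_eq_zero]
  nth_rw 1 [hr]
  rw [← mulVec_sub, mulVec_dotProduct_s2,
    dotProduct_eq_sum_of_sparseSupport_subset (sparseSupport_sub_subset hv hw)]
  exact Finset.sum_eq_zero fun j hj => by
    rw [transpose_mulVec_projPerp_mulVec_apply hG _ hj, mul_zero]

end Projection

section OMP

variable {m n k : ℕ} {A : Matrix (Fin m) (Fin n) ℝ} {δ : ℝ}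

lemma RIP.omp_selects_mem_sdiff (h : RIP A k δ) (hδ : δ ^ 2 * k < 1) {x : Fin n → ℝ}
    (hx : (sparseSupport x).card < k) {S : Finset (Fin n)} (hS : S ⊂ sparseSupport x)
    {s : Fin n} (hs : ∀ i, |(Aᵀ *ᵥ (projPerp A S *ᵥ (A *ᵥ x))) i|
      ≤ |(Aᵀ *ᵥ (projPerp A S *ᵥ (A *ᵥ x))) s|) :
    s ∈ sparseSupport x \ S := by
  have hδ1 : δ < 1 := lt_one_of_sq_mul_lt_one (by omega) hδ
  have hG := isUnit_det_gram h hδ1 ((Finset.card_le_card hS.subset).trans hx.le)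
  obtain ⟨w, hw, hr⟩ := projPerp_mulVec_eq_sub (A := A) (A *ᵥ x)
  rw [← mulVec_sub] at hr
  have hu : sparseSupport (x - w) ⊆ sparseSupport x :=
    sparseSupport_sub_subset subset_rfl (hw.trans hS.subset)
  have hu0 : x - w ≠ 0 := by
    obtain ⟨j, hjx, hjS⟩ := Finset.exists_of_ssubset hS
    refine fun h0 => mem_sparseSupport.mp hjx ?_
    simpa [sparseSupport_subset_iff.mp hw j hjS] using congrFun h0 j
  refine Finset.mem_sdiff.mpr ⟨?_, fun hsS => ?_⟩
  · by_contra hsx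
    obtain ⟨j, -, hlt⟩ := h.exists_mem_abs_correlation_gt hδ hx hu hu0 hsx
    exact (hr ▸ hs j).not_gt hlt
  · have hs0 := transpose_mulVec_projPerp_mulVec_apply hG (A *ᵥ x) hsS
    obtain ⟨j, -, hj⟩ := h.exists_correlation_ne_zero hδ1 hx.le hu hu0
    rw [← hr] at hj
    exact hj (abs_nonpos_iff.mp ((hs j).trans_eq (by rw [hs0, abs_zero])))

lemma RIP.omp_support_eq (h : RIP A k δ) (hδ : δ ^ 2 * k < 1) {x : Fin n → ℝ}
    (hx : (sparseSupport x).card < k) (s : ℕ → Fin n) (S : ℕ → Finset (Fin n))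
    (hS0 : S 0 = ∅) (hSk : ∀ j, S (j + 1) = S j ∪ {s (j + 1)})
    (hsel : ∀ j i, |(Aᵀ *ᵥ (projPerp A (S j) *ᵥ (A *ᵥ x))) i|
      ≤ |(Aᵀ *ᵥ (projPerp A (S j) *ᵥ (A *ᵥ x))) (s (j + 1))|) :
    S (sparseSupport x).card = sparseSupport x := by
  have hinv : ∀ j ≤ (sparseSupport x).card, S j ⊆ sparseSupport x ∧ (S j).card = j := by
    intro j
    induction j with
    | zero => simp [hS0]
    | succ j ih =>
      intro hj
      obtain ⟨hsub, hcard⟩ := ih (by omega)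
      have hss : S j ⊂ sparseSupport x :=
        hsub.ssubset_of_ne fun he => by rw [he] at hcard; omega
      have hnew := Finset.mem_sdiff.mp (h.omp_selects_mem_sdiff hδ hx hss (hsel j))
      rw [hSk, Finset.union_singleton]
      exact ⟨Finset.insert_subset hnew.1 hsub, by rw [Finset.card_insert_of_notMem hnew.2, hcard]⟩
  obtain ⟨hsub, hcard⟩ := hinv _ le_rfl
  exact Finset.eq_of_subset_of_card_le hsub hcard.ge

end OMP

theorem omp_exact_recovery_noiseless_general {m n K : ℕ}
    (A : Matrix (Fin m) (Fin n) ℝ) (x : Fin n → ℝ) (δ : ℝ)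
    (hδ0 : 0 ≤ δ)
    (hδ : δ < 1 / Real.sqrt ((K : ℝ) + 1))
    (hRIP : RIP A (K + 1) δ)
    (hx : (sparseSupport x).card ≤ K)
    (y : Fin m → ℝ) (hy : y = A.mulVec x)
    (s : ℕ → Fin n) (S : ℕ → Finset (Fin n)) (r : ℕ → Fin m → ℝ)
    (hS0 : S 0 = ∅)
    (hSk : ∀ k, S (k + 1) = S k ∪ {s (k + 1)})
    (hr : ∀ k, r k = (projPerp A (S k)).mulVec y)
    (hsel : ∀ k, ∀ i : Fin n,
      |(Aᵀ.mulVec (r k)) i| ≤ |(Aᵀ.mulVec (r k)) (s (k + 1))|) :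
    S (sparseSupport x).card = sparseSupport x ∧
    r (sparseSupport x).card = 0 ∧
    ∀ xh : Fin n → ℝ, sparseSupport xh ⊆ S (sparseSupport x).card →
      (∀ z : Fin n → ℝ, sparseSupport z ⊆ S (sparseSupport x).card →
        l2norm (y - A.mulVec xh) ≤ l2norm (y - A.mulVec z)) →
      xh = x := by
  have hδK : δ ^ 2 * ((K + 1 : ℕ) : ℝ) < 1 :=
    sq_mul_lt_one_of_lt_one_div_sqrt hδ0 (by positivity) (by exact_mod_cast hδ)
  have hδ1 : δ < 1 := lt_one_of_sq_mul_lt_one K.succ_pos hδK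
  have hxK : (sparseSupport x).card < K + 1 := Nat.lt_succ_of_le hx
  subst hy
  simp only [hr] at hsel ⊢
  have hSx := hRIP.omp_support_eq hδK hxK s S hS0 hSk hsel
  rw [hSx]
  refine ⟨rfl, projPerp_mulVec_mulVec_eq_zero (isUnit_det_gram hRIP hδ1 hxK.le) subset_rfl,
    fun xh hxh hmin => ?_⟩
  have hres : l2norm (A *ᵥ x - A *ᵥ xh) = 0 := by
    have := hmin x subset_rfl
    rw [sub_self, l2norm_eq_zero_iff.mpr rfl] at this
    exact le_antisymm this (Real.sqrt_nonneg _)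
  exact hRIP.eq_of_mulVec_eq hδ1 hxK.le hxh subset_rfl
    (sub_eq_zero.mp (l2norm_eq_zero_iff.mp hres)).symm

/-- Corollary 1 (noise-free case): under `δ_{K+1} < 1/√(K+1)`, OMP exactly
recovers the `K`-sparse signal `x` in `|Ω| ≤ K` iterations: `S_{|Ω|} = Ω`,
`r^{|Ω|} = 0`, and the least-squares estimate supported on `S_{|Ω|}` equals `x`. -/
theorem omp_exact_recovery_noiseless {m n K : ℕ} (hK : 1 ≤ K)
    (A : Matrix (Fin m) (Fin n) ℝ) (x : Fin n → ℝ) (δ : ℝ)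
    (hδ0 : 0 ≤ δ) (hδlt1 : δ < 1)
    (hδ : δ < 1 / Real.sqrt ((K : ℝ) + 1))
    (hRIP : RIP A (K + 1) δ)
    (hx : (sparseSupport x).card ≤ K)
    (hne : (sparseSupport x).Nonempty)
    (y : Fin m → ℝ) (hy : y = A.mulVec x)
    (s : ℕ → Fin n) (S : ℕ → Finset (Fin n)) (r : ℕ → Fin m → ℝ)
    (hS0 : S 0 = ∅)
    (hSk : ∀ k, S (k + 1) = S k ∪ {s (k + 1)})
    (hr : ∀ k, r k = (projPerp A (S k)).mulVec y)
    (hsel : ∀ k, ∀ i : Fin n,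
      |(Aᵀ.mulVec (r k)) i| ≤ |(Aᵀ.mulVec (r k)) (s (k + 1))|) :
    S (sparseSupport x).card = sparseSupport x ∧
    r (sparseSupport x).card = 0 ∧
    ∀ xh : Fin n → ℝ, sparseSupport xh ⊆ S (sparseSupport x).card →
      (∀ z : Fin n → ℝ, sparseSupport z ⊆ S (sparseSupport x).card →
        l2norm (y - A.mulVec xh) ≤ l2norm (y - A.mulVec z)) →
      xh = x :=
  omp_exact_recovery_noiseless_general A x δ hδ0 hδ hRIP hx y hy s S r hS0 hSk hr hsel
end

section
/- Let A ∈ ℝ^{m×n}, let K ≥ 1 be an integer, and suppose δ ∈ [0,1) satisfies the RIP of order K+1 for A. Let Ω ⊆ {1,…,n} with |Ω| ≤ K, Ω ≠ ∅ and Ω^c ≠ ∅, let S ⊆ Ω with |S| < |Ω|, and let v ∈ ℝ^m satisfy ‖v‖₂ ≤ ε. Then ‖A_{Ω∖S}ᵀ P_S^⊥ v‖_∞ + ‖A_{Ω^c}ᵀ P_S^⊥ v‖_∞ ≤ √(2(1+δ)) · ε. -/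
/-
Set `w = P_S^⊥ v` and `u = Aᵀ w`, and let `i ∈ Ω ∖ S`, `j ∈ Ωᶜ` be where `|u|` peaks on the two
index sets. With `x` the vector carrying the signs of `u i` and `u j` at `i` and `j`, the left-hand
side is `⟪x, Aᵀ w⟫ = ⟪A x, w⟫ ≤ ‖A x‖ ‖w‖`. As `x` is 2-sparse with `‖x‖² = 2`, the RIP gives
`‖A x‖ ≤ √(2(1+δ))`. Finally `‖w‖ ≤ ‖v‖ ≤ ε`, because `|S| < |Ω| ≤ K`, so the lower RIP bound makes
`A_S` injective and `P_S^⊥` is then a genuine orthogonal projection.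
-/

open Matrix Finset

lemma sum_sq_eq_dotProduct {ι : Type*} [Fintype ι] (v : ι → ℝ) : ∑ i, v i ^ 2 = v ⬝ᵥ v := by
  simp only [dotProduct, sq]

section Projection

variable {m ι : Type*} [Fintype m] [DecidableEq m] [Fintype ι] [DecidableEq ι]

omit [DecidableEq m] in
lemma dotProduct_mulVec_self_eq {P : Matrix m m ℝ} (hsymm : Pᵀ = P) (hP : IsIdempotentElem P)
    (v : m → ℝ) : P *ᵥ v ⬝ᵥ P *ᵥ v = v ⬝ᵥ P *ᵥ v := by
  rw [dotProduct_mulVec, ← mulVec_transpose, hsymm, mulVec_mulVec, hP.eq, dotProduct_comm]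

/-- `v = P v + (1 - P) v` is an orthogonal decomposition. -/
lemma dotProduct_mulVec_self_le {P : Matrix m m ℝ} (hsymm : Pᵀ = P) (hP : IsIdempotentElem P)
    (v : m → ℝ) : P *ᵥ v ⬝ᵥ P *ᵥ v ≤ v ⬝ᵥ v := by
  have hcompl := dotProduct_mulVec_self_eq (P := 1 - P)
    (by rw [transpose_sub, transpose_one, hsymm]) hP.one_sub v
  have hnn : 0 ≤ (1 - P) *ᵥ v ⬝ᵥ (1 - P) *ᵥ v := by
    rw [← sum_sq_eq_dotProduct]
    positivity
  rw [hcompl, sub_mulVec, one_mulVec, dotProduct_sub] at hnn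
  rw [dotProduct_mulVec_self_eq hsymm hP]
  linarith

omit [DecidableEq m] in
lemma transpose_gram_projection (B : Matrix m ι ℝ) :
    (B * (Bᵀ * B)⁻¹ * Bᵀ)ᵀ = B * (Bᵀ * B)⁻¹ * Bᵀ := by
  rw [transpose_mul, transpose_mul, transpose_transpose, transpose_nonsing_inv, transpose_mul,
    transpose_transpose, Matrix.mul_assoc]

omit [DecidableEq m] in
lemma isIdempotentElem_gram_projection {B : Matrix m ι ℝ} (hB : IsUnit (Bᵀ * B).det) :
    IsIdempotentElem (B * (Bᵀ * B)⁻¹ * Bᵀ) := by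
  unfold IsIdempotentElem
  calc B * (Bᵀ * B)⁻¹ * Bᵀ * (B * (Bᵀ * B)⁻¹ * Bᵀ)
      = B * ((Bᵀ * B)⁻¹ * (Bᵀ * B)) * (Bᵀ * B)⁻¹ * Bᵀ := by simp only [Matrix.mul_assoc]
    _ = B * (Bᵀ * B)⁻¹ * Bᵀ := by rw [nonsing_inv_mul _ hB, Matrix.mul_one]

lemma dotProduct_self_one_sub_gram_projection_mulVec_le {B : Matrix m ι ℝ}
    (hB : Function.Injective B.mulVec) (v : m → ℝ) :
    (1 - B * (Bᵀ * B)⁻¹ * Bᵀ) *ᵥ v ⬝ᵥ (1 - B * (Bᵀ * B)⁻¹ * Bᵀ) *ᵥ v ≤ v ⬝ᵥ v := by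
  have hgram : (Bᵀ * B).PosDef := by
    simpa only [conjTranspose_eq_transpose_of_trivial] using PosDef.conjTranspose_mul_self B hB
  refine dotProduct_mulVec_self_le ?_
    (isIdempotentElem_gram_projection hgram.det_pos.ne'.isUnit).one_sub v
  rw [transpose_sub, transpose_one, transpose_gram_projection]

end Projection

section Restriction

variable {m n : ℕ}

lemma sum_restrictVec_mul (x y : Fin n → ℝ) (T : Finset (Fin n)) :
    ∑ i, restrictVec x T i * y i = ∑ i ∈ T, x i * y i := by
  simp only [restrictVec, ite_mul, zero_mul, Finset.sum_ite_mem, Finset.univ_inter]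

lemma sparseSupport_restrictVec_subset (x : Fin n → ℝ) (T : Finset (Fin n)) :
    sparseSupport (restrictVec x T) ⊆ T := by
  intro i hi
  by_contra hiT
  simp [sparseSupport, restrictVec, hiT] at hi

lemma colSub_mulVec_s5 (A : Matrix (Fin m) (Fin n) ℝ) (S : Finset (Fin n)) (x : Fin n → ℝ) :
    colSub A S *ᵥ (fun j => x j) = A *ᵥ restrictVec x S := by
  ext i
  simp only [mulVec, dotProduct, colSub, mul_comm (A i _)]
  rw [sum_restrictVec_mul, Finset.sum_coe_sort S (fun j => x j * A i j)]

end Restriction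

section RIP

variable {m n k : ℕ} {A : Matrix (Fin m) (Fin n) ℝ} {δ : ℝ}

lemma RIP.eq_zero_of_mulVec_eq_zero_s5 (hA : RIP A k δ) (hδ : δ < 1) {x : Fin n → ℝ}
    (hx : (sparseSupport x).card ≤ k) (hAx : A *ᵥ x = 0) : x = 0 := by
  have hlower := (hA x hx).1
  simp only [hAx, Pi.zero_apply, ne_eq, OfNat.ofNat_ne_zero, not_false_eq_true, zero_pow,
    Finset.sum_const_zero] at hlower
  have hsum : ∑ i, x i ^ 2 = 0 :=
    le_antisymm (by nlinarith) (by positivity)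
  ext i
  simpa using (Finset.sum_eq_zero_iff_of_nonneg (fun i _ => sq_nonneg (x i))).mp hsum i
    (Finset.mem_univ i)

lemma RIP.colSub_mulVec_injective (hA : RIP A k δ) (hδ : δ < 1) {S : Finset (Fin n)}
    (hS : S.card ≤ k) : Function.Injective (colSub A S).mulVec := by
  refine (injective_iff_map_eq_zero (colSub A S).mulVecLin).mpr fun y hy => ?_
  classical
  set x : Fin n → ℝ := fun i => if h : i ∈ S then y ⟨i, h⟩ else 0
  have hy_eq : y = fun j : S => x j := funext fun j => by simp [x]
  have hrestrict : restrictVec x S = 0 := by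
    refine hA.eq_zero_of_mulVec_eq_zero_s5 hδ
      ((card_le_card (sparseSupport_restrictVec_subset x S)).trans hS) ?_
    rw [← colSub_mulVec_s5, ← hy_eq]
    exact hy
  ext j
  rw [hy_eq]
  simpa [restrictVec, j.2] using congrFun hrestrict j

/-- Test `Aᵀ w` against its `±1` sign pattern `x` on `T`: then `∑_T |(Aᵀ w)_i| = ⟪A x, w⟫`,
and Cauchy–Schwarz with the RIP bound `‖A x‖² ≤ (1 + δ) |T|` finishes. The sign of `0` is taken
to be `1`, so that `‖x‖² = |T|` exactly. -/
lemma RIP.sum_abs_transpose_mulVec_le (hA : RIP A k δ) {T : Finset (Fin n)} (hT : T.card ≤ k)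
    (w : Fin m → ℝ) :
    ∑ i ∈ T, |(Aᵀ *ᵥ w) i| ≤ Real.sqrt (T.card * (1 + δ)) * l2norm w := by
  set u := Aᵀ *ᵥ w
  set x := restrictVec (fun i => if 0 ≤ u i then 1 else -1) T
  have hxu : ∑ i ∈ T, |u i| = ∑ i, (A *ᵥ x) i * w i := by
    calc ∑ i ∈ T, |u i| = ∑ i, x i * u i := by
          rw [sum_restrictVec_mul]
          refine Finset.sum_congr rfl fun i _ => ?_
          split_ifs with h
          · rw [one_mul, abs_of_nonneg h]
          · rw [neg_one_mul, abs_of_neg (not_le.mp h)]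
      _ = ∑ i, (A *ᵥ x) i * w i := by
          simpa only [dotProduct, dotProduct_mulVec, vecMul_transpose] using
            (dotProduct_mulVec x Aᵀ w)
  have hx_sq : ∑ i, x i ^ 2 = T.card := by
    rw [Finset.card_eq_sum_ones, Nat.cast_sum, Nat.cast_one]
    simp only [sq, x, sum_restrictVec_mul]
    refine Finset.sum_congr rfl fun i hi => ?_
    simp only [restrictVec, hi, if_true]
    split_ifs <;> norm_num
  have hAx : ∑ i, (A *ᵥ x) i ^ 2 ≤ T.card * (1 + δ) := by
    have hsupp : (sparseSupport x).card ≤ k :=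
      (card_le_card (sparseSupport_restrictVec_subset _ T)).trans hT
    have hupper := (hA x hsupp).2
    rw [hx_sq] at hupper
    linarith
  calc ∑ i ∈ T, |u i| = ∑ i, (A *ᵥ x) i * w i := hxu
    _ ≤ Real.sqrt (∑ i, (A *ᵥ x) i ^ 2) * Real.sqrt (∑ i, w i ^ 2) :=
        Real.sum_mul_le_sqrt_mul_sqrt _ _ _
    _ ≤ Real.sqrt (T.card * (1 + δ)) * l2norm w :=
        mul_le_mul_of_nonneg_right (Real.sqrt_le_sqrt hAx) (Real.sqrt_nonneg _)

end RIP

lemma l2norm_projPerp_mulVec_le {m n : ℕ} {A : Matrix (Fin m) (Fin n) ℝ} {S : Finset (Fin n)}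
    (hS : Function.Injective (colSub A S).mulVec) (v : Fin m → ℝ) :
    l2norm (projPerp A S *ᵥ v) ≤ l2norm v := by
  unfold l2norm
  rw [sum_sq_eq_dotProduct, sum_sq_eq_dotProduct]
  exact Real.sqrt_le_sqrt (dotProduct_self_one_sub_gram_projection_mulVec_le hS v)

lemma exists_mem_supAbs_eq {n : ℕ} {T : Finset (Fin n)} (hT : T.Nonempty) (w : Fin n → ℝ) :
    ∃ i ∈ T, supAbs T w = |w i| := by
  obtain ⟨i, hi, hmax⟩ :=
    ((coe_nonempty.mpr hT).image fun i => |w i|).csSup_mem (T.finite_toSet.image _)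
  exact ⟨i, hi, hmax.symm⟩

theorem omp_noise_bound_general {m n : ℕ} (A : Matrix (Fin m) (Fin n) ℝ) (K : ℕ)
    (δ : ℝ) (hδ1 : δ < 1) (hRIP : RIP A (K + 1) δ)
    (Ω : Finset (Fin n)) (hΩ : Ω.card ≤ K) (hΩcne : Ωᶜ.Nonempty)
    (S : Finset (Fin n)) (hS : S ⊆ Ω) (hcard : S.card < Ω.card)
    (v : Fin m → ℝ) (ε : ℝ) (hv : l2norm v ≤ ε) :
    supAbs (Ω \ S) (Aᵀ.mulVec ((projPerp A S).mulVec v))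
      + supAbs Ωᶜ (Aᵀ.mulVec ((projPerp A S).mulVec v))
      ≤ Real.sqrt (2 * (1 + δ)) * ε := by
  set w := projPerp A S *ᵥ v
  have hΩS : (Ω \ S).Nonempty := by
    rw [← card_pos, card_sdiff_of_subset hS]
    omega
  obtain ⟨i, hi, hi_max⟩ := exists_mem_supAbs_eq hΩS (Aᵀ *ᵥ w)
  obtain ⟨j, hj, hj_max⟩ := exists_mem_supAbs_eq hΩcne (Aᵀ *ᵥ w)
  have hij : i ≠ j := by
    rintro rfl
    exact mem_compl.mp hj (mem_sdiff.mp hi).1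
  have hpair : |(Aᵀ *ᵥ w) i| + |(Aᵀ *ᵥ w) j| ≤ Real.sqrt (2 * (1 + δ)) * l2norm w := by
    have hT : ({i, j} : Finset (Fin n)).card ≤ K + 1 := by
      rw [card_pair hij]
      omega
    simpa [sum_pair hij, card_pair hij] using hRIP.sum_abs_transpose_mulVec_le hT w
  have hw : l2norm w ≤ l2norm v :=
    l2norm_projPerp_mulVec_le (hRIP.colSub_mulVec_injective hδ1 (by grind [card_le_card hS])) v
  rw [hi_max, hj_max]
  exact hpair.trans (mul_le_mul_of_nonneg_left (hw.trans hv) (Real.sqrt_nonneg _))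

/-- Noise bound: `‖A_{Ω∖S}ᵀ P_S^⊥ v‖_∞ + ‖A_{Ω^c}ᵀ P_S^⊥ v‖_∞ ≤ √(2(1+δ)) ε`. -/
theorem omp_noise_bound {m n : ℕ} (A : Matrix (Fin m) (Fin n) ℝ) (K : ℕ) (hK : 1 ≤ K)
    (δ : ℝ) (hδ0 : 0 ≤ δ) (hδ1 : δ < 1) (hRIP : RIP A (K + 1) δ)
    (Ω : Finset (Fin n)) (hΩ : Ω.card ≤ K) (hΩne : Ω.Nonempty) (hΩcne : Ωᶜ.Nonempty)
    (S : Finset (Fin n)) (hS : S ⊆ Ω) (hcard : S.card < Ω.card)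
    (v : Fin m → ℝ) (ε : ℝ) (hv : l2norm v ≤ ε) :
    supAbs (Ω \ S) (Aᵀ.mulVec ((projPerp A S).mulVec v))
      + supAbs Ωᶜ (Aᵀ.mulVec ((projPerp A S).mulVec v))
      ≤ Real.sqrt (2 * (1 + δ)) * ε :=
  omp_noise_bound_general A K δ hδ1 hRIP Ω hΩ hΩcne S hS hcard v ε hv
end

section
/- Let K ≥ 1 be an integer, let δ be a real number with 0 < δ < 1/√(K+1), and let ε > 0. If additionally 1 − δ − √(1−δ)·√K·δ > 0, then (√(1+δ) + 1)·ε / (1 − δ − √(1−δ)·√K·δ) > 2ε / (1 − √(K+1)·δ). That is, the minimum-magnitude requirement min_{i∈Ω}|x_i| > 2ε/(1 − √(K+1)δ_{K+1}) is strictly weaker than the requirement min_{i∈Ω}|x_i| > (√(1+δ_{K+1})+1)ε/(1 − δ_{K+1} − √(1−δ_{K+1})√K δ_{K+1}). -/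
/-! The first bound has the smaller denominator: `√(K+1) < 1 + √(1-δ)·√K` reduces, after squaring
twice, to `δ²K < 4(1-δ)`, which follows from `δ²(K+1) < 1` because `1 - δ² ≤ 4(1-δ)` for `δ ≤ 1`.
Its numerator is also the larger one, as `√(1+δ) > 1`. -/

namespace Real

theorem sqrt_add_one_lt_one_add_sqrt_one_sub_mul_sqrt {x δ : ℝ} (hx : 0 < x)
    (hδ : δ ^ 2 * (x + 1) < 1) :
    √(x + 1) < 1 + √(1 - δ) * √x := by
  have hδ1 : δ < 1 := by nlinarith
  have hs : √(1 - δ) * √x = √((1 - δ) * x) := (sqrt_mul (by linarith) x).symm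
  have hs_sq : √((1 - δ) * x) ^ 2 = (1 - δ) * x := sq_sqrt (by positivity)
  have hs_pos : 0 < √((1 - δ) * x) := sqrt_pos.mpr (by nlinarith)
  have hcross : δ * x < 2 * √((1 - δ) * x) := by
    nlinarith [mul_pos hx hx, sq_nonneg (δ - 1)]
  rw [hs, sqrt_lt' (by positivity)]
  nlinarith

end Real

/-- For `K ≥ 1`, `0 < δ < 1/√(K+1)`, `ε > 0` and `1 − δ − √(1−δ)√K δ > 0`:
`(√(1+δ)+1)ε/(1 − δ − √(1−δ)√K δ) > 2ε/(1 − √(K+1)δ)`. -/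
theorem min_magnitude_comparison (K : ℕ) (hK : 1 ≤ K) (δ ε : ℝ)
    (hδ0 : 0 < δ) (hδ : δ < 1 / Real.sqrt ((K : ℝ) + 1)) (hε : 0 < ε)
    (hpos : 0 < 1 - δ - Real.sqrt (1 - δ) * Real.sqrt (K : ℝ) * δ) :
    (Real.sqrt (1 + δ) + 1) * ε
        / (1 - δ - Real.sqrt (1 - δ) * Real.sqrt (K : ℝ) * δ)
      > 2 * ε / (1 - Real.sqrt ((K : ℝ) + 1) * δ) := by
  have hK0 : (0 : ℝ) < K := by exact_mod_cast hK
  have hRIP : Real.sqrt ((K : ℝ) + 1) * δ < 1 := by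
    rwa [lt_div_iff₀' (by positivity)] at hδ
  have hδ_sq : δ ^ 2 * ((K : ℝ) + 1) < 1 := by
    have := Real.sq_sqrt (show (0 : ℝ) ≤ K + 1 by positivity)
    nlinarith [mul_pos (Real.sqrt_pos.mpr (by positivity : (0 : ℝ) < K + 1)) hδ0]
  have hden : 1 - δ - Real.sqrt (1 - δ) * Real.sqrt (K : ℝ) * δ
      < 1 - Real.sqrt ((K : ℝ) + 1) * δ := by
    nlinarith [Real.sqrt_add_one_lt_one_add_sqrt_one_sub_mul_sqrt hK0 hδ_sq]
  have hnum : 2 < Real.sqrt (1 + δ) + 1 := by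
    linarith [Real.lt_sqrt_of_sq_lt (show (1 : ℝ) ^ 2 < 1 + δ by linarith)]
  calc 2 * ε / (1 - Real.sqrt ((K : ℝ) + 1) * δ)
      < 2 * ε / (1 - δ - Real.sqrt (1 - δ) * Real.sqrt (K : ℝ) * δ) :=
        div_lt_div_of_pos_left (by positivity) hpos hden
    _ < (Real.sqrt (1 + δ) + 1) * ε / (1 - δ - Real.sqrt (1 - δ) * Real.sqrt (K : ℝ) * δ) := by
        gcongr
end
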